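/- arXiv:1706.04801 — 2 statements merged into one kernel-verified Lean document; each statement's English description precedes it below -/
import Mathlib

section
/- Let K be a field and α ∈ K((T)) with a continued fraction datum (αₙ, aₙ) and canonical convergents (pₙ, qₙ). Then for every n ≥ 0, orderTop(ι pₙ − α·ι qₙ) = deg qₙ₊₁ = deg aₙ₊₁ + deg qₙ. In particular orderTop(ι pₙ − α·ι qₙ) > deg qₙ, so (pₙ, qₙ) is a convergent of α. -/
/-!
Write `xₙ = αₙ - ι aₙ` and `dₙ = ord xₙ > 0`. Then `αₙ₊₁ = xₙ⁻¹` has order `-dₙ`, and since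
`ι aₙ₊₁` agrees with `αₙ₊₁` up to terms of positive order, `deg aₙ₊₁ = dₙ ≥ 1`; this makes the
degrees of the `qₙ` add up: `deg qₙ₊₁ = deg aₙ₊₁ + deg qₙ`. The errors `Eₙ = ι pₙ - α ι qₙ`
satisfy `E₀ α₁ = -1` and `Eₙ₊₁ αₙ₊₂ = -Eₙ`, so `ord Eₙ = d₀ + ⋯ + dₙ = deg qₙ₊₁`.
-/

open Polynomial

/-- The ring homomorphism `K[X] → K((T))` sending `X` to `T⁻¹`. -/
noncomputable def iota {K : Type*} [Field K] : Polynomial K →+* LaurentSeries K :=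
  Polynomial.eval₂RingHom (HahnSeries.C : K →+* LaurentSeries K)
    (HahnSeries.single (-1 : ℤ) (1 : K))

section Iota

variable {K : Type*} [Field K]

lemma iota_C_mul_X_pow (c : K) (n : ℕ) :
    iota (C c * X ^ n) = HahnSeries.single (-(n : ℤ)) c := by
  simp only [iota, map_mul, map_pow, coe_eval₂RingHom, eval₂_C, eval₂_X,
    HahnSeries.single_pow, HahnSeries.C_apply, HahnSeries.single_mul_single]
  norm_num

lemma orderTop_iota {f : K[X]} (hf : f ≠ 0) :
    (iota f).orderTop = ((-f.natDegree : ℤ) : WithTop ℤ) := by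
  induction h : f.natDegree using Nat.strong_induction_on generalizing f with
  | _ n ih =>
  subst h
  have hlead : (iota (C f.leadingCoeff * X ^ f.natDegree)).orderTop =
      ((-f.natDegree : ℤ) : WithTop ℤ) := by
    rw [iota_C_mul_X_pow, HahnSeries.orderTop_single (leadingCoeff_ne_zero.mpr hf)]
  conv_lhs => rw [← f.eraseLead_add_C_mul_X_pow, map_add]
  by_cases hzero : f.eraseLead = 0
  · rw [hzero, map_zero, zero_add, hlead]
  have hlt := f.eraseLead_natDegree_lt_or_eraseLead_eq_zero.resolve_right hzero
  have hlower :
      (iota (C f.leadingCoeff * X ^ f.natDegree)).orderTop < (iota f.eraseLead).orderTop := by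
    rw [hlead, ih _ hlt hzero rfl]
    exact_mod_cast (by omega : -(f.natDegree : ℤ) < -(f.eraseLead.natDegree : ℤ))
  rw [HahnSeries.orderTop_add_eq_right hlower, hlead]

lemma natDegree_eq_neg_order_of_orderTop_sub_iota_pos {β : LaurentSeries K} {b : K[X]}
    (hβ : β.order < 0) (h : 0 < (β - iota b).orderTop) : (b.natDegree : ℤ) = -β.order := by
  have hβ0 : β ≠ 0 := by rintro rfl; simp at hβ
  have hβtop : β.orderTop = β.order := (HahnSeries.order_eq_orderTop_of_ne_zero hβ0).symm
  have hlt : β.orderTop < (β - iota b).orderTop :=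
    hβtop ▸ lt_trans (by exact_mod_cast hβ) h
  have hiota : (iota b).orderTop = β.orderTop := by
    rw [← sub_sub_cancel β (iota b), HahnSeries.orderTop_sub hlt]
  have hb : b ≠ 0 := by
    rintro rfl
    simp [hβtop] at hiota
  rw [orderTop_iota hb, hβtop] at hiota
  have : -(b.natDegree : ℤ) = β.order := by exact_mod_cast hiota
  omega

end Iota

section Order

variable {R : Type*} [CommRing R] [IsDomain R] {x y z : LaurentSeries R}

lemma LaurentSeries.order_eq_neg_of_mul_eq_one (h : x * y = 1) : x.order = -y.order := by
  have := congrArg HahnSeries.order h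
  rw [HahnSeries.order_mul (left_ne_zero_of_mul_eq_one h) (right_ne_zero_of_mul_eq_one h),
    HahnSeries.order_one] at this
  omega

lemma LaurentSeries.ne_zero_and_order_eq_of_mul_eq_neg (h : x * y = -z) (hz : z ≠ 0) :
    x ≠ 0 ∧ x.order = z.order - y.order := by
  have hxy : x * y ≠ 0 := h ▸ neg_ne_zero.mpr hz
  have := congrArg HahnSeries.order h
  rw [HahnSeries.order_mul (left_ne_zero_of_mul hxy) (right_ne_zero_of_mul hxy),
    HahnSeries.order_neg] at this
  exact ⟨left_ne_zero_of_mul hxy, by omega⟩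

end Order

theorem natDegree_den_succ {R : Type*} [Semiring R] [NoZeroDivisors R] {a q : ℕ → R[X]}
    (ha : ∀ n, 0 < (a (n + 1)).natDegree) (hq0 : q 0 = 1) (hq1 : q 1 = a 1)
    (hqrec : ∀ n, q (n + 2) = a (n + 2) * q (n + 1) + q n) (n : ℕ) :
    (q (n + 1)).natDegree = (a (n + 1)).natDegree + (q n).natDegree := by
  induction n with
  | zero => rw [hq0, hq1, natDegree_one, add_zero]
  | succ n ih =>
    have hq : q (n + 1) ≠ 0 := fun h => by have := ha n; simp [h] at ih; omega
    have ha' : a (n + 2) ≠ 0 := fun h => by have := ha (n + 1); simp [h] at this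
    have hmul := natDegree_mul ha' hq
    have hlt : (q n).natDegree < (a (n + 2) * q (n + 1)).natDegree := by
      have : 0 < (a (n + 2)).natDegree := ha (n + 1)
      omega
    rw [hqrec, natDegree_add_eq_left_of_natDegree_lt hlt, hmul]

section ContinuedFraction

variable {K : Type*} [Field K] {α : LaurentSeries K} {A : ℕ → LaurentSeries K} {a : ℕ → K[X]}

lemma order_completeQuotient_succ_lt_zero
    (hfrac : ∀ n, 0 < (A n - iota (a n)).orderTop ∧ A (n + 1) * (A n - iota (a n)) = 1)
    (n : ℕ) : (A (n + 1)).order < 0 := by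
  have hx : A n - iota (a n) ≠ 0 := right_ne_zero_of_mul_eq_one (hfrac n).2
  have hpos : 0 < (A n - iota (a n)).order := by
    have := (hfrac n).1
    rwa [← HahnSeries.order_eq_orderTop_of_ne_zero hx, WithTop.coe_pos] at this
  rw [LaurentSeries.order_eq_neg_of_mul_eq_one (hfrac n).2]
  omega

lemma natDegree_partialQuotient_succ
    (hfrac : ∀ n, 0 < (A n - iota (a n)).orderTop ∧ A (n + 1) * (A n - iota (a n)) = 1)
    (n : ℕ) : ((a (n + 1)).natDegree : ℤ) = -(A (n + 1)).order :=
  natDegree_eq_neg_order_of_orderTop_sub_iota_pos (order_completeQuotient_succ_lt_zero hfrac n)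
    (hfrac (n + 1)).1

lemma convergent_error_mul_completeQuotient (h0 : A 0 = α)
    (hfrac : ∀ n, A (n + 1) * (A n - iota (a n)) = 1) {p q : ℕ → K[X]}
    (hp0 : p 0 = a 0) (hq0 : q 0 = 1) (hp1 : p 1 = a 1 * a 0 + 1) (hq1 : q 1 = a 1)
    (hprec : ∀ n, p (n + 2) = a (n + 2) * p (n + 1) + p n)
    (hqrec : ∀ n, q (n + 2) = a (n + 2) * q (n + 1) + q n) :
    (iota (p 0) - α * iota (q 0)) * A 1 = -1 ∧
      ∀ n, (iota (p (n + 1)) - α * iota (q (n + 1))) * A (n + 2) =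
        -(iota (p n) - α * iota (q n)) := by
  subst h0
  refine ⟨?_, fun n => ?_⟩
  · rw [hp0, hq0, map_one]
    linear_combination -hfrac 0
  induction n with
  | zero =>
    simp only [hp0, hq0, hp1, hq1, map_one, map_add, map_mul]
    linear_combination (A 0 - iota (a 0)) * hfrac 1 - A 2 * hfrac 0
  | succ n ih =>
    simp only [hprec n, hqrec n, map_add, map_mul] at ih ⊢
    linear_combination A (n + 3) * ih - (iota (p (n + 1)) - A 0 * iota (q (n + 1))) * hfrac (n + 2)

lemma order_convergent_error
    (hfrac : ∀ n, 0 < (A n - iota (a n)).orderTop ∧ A (n + 1) * (A n - iota (a n)) = 1)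
    {E : ℕ → LaurentSeries K} {q : ℕ → K[X]} (hq1 : q 1 = a 1)
    (hq : ∀ n, (q (n + 1)).natDegree = (a (n + 1)).natDegree + (q n).natDegree)
    (hE0 : E 0 * A 1 = -1) (hE : ∀ n, E (n + 1) * A (n + 2) = -E n) (n : ℕ) :
    E n ≠ 0 ∧ (E n).order = (q (n + 1)).natDegree := by
  induction n with
  | zero =>
    obtain ⟨hne, hord⟩ := LaurentSeries.ne_zero_and_order_eq_of_mul_eq_neg hE0 one_ne_zero
    refine ⟨hne, ?_⟩
    rw [hord, HahnSeries.order_one, hq1]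
    linear_combination -natDegree_partialQuotient_succ hfrac 0
  | succ n ih =>
    obtain ⟨hne, hord⟩ := LaurentSeries.ne_zero_and_order_eq_of_mul_eq_neg (hE n) ih.1
    refine ⟨hne, ?_⟩
    rw [hord, ih.2, hq (n + 1)]
    push_cast
    linear_combination -natDegree_partialQuotient_succ hfrac (n + 1)

end ContinuedFraction

/-- The canonical convergents of a continued fraction expansion satisfy
`orderTop (ι pₙ - α ι qₙ) = deg qₙ₊₁ = deg aₙ₊₁ + deg qₙ > deg qₙ`;
in particular they are convergents of `α`. -/
theorem canonical_convergents_approximation_quality {K : Type*} [Field K]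
    (α : LaurentSeries K)
    (A : ℕ → LaurentSeries K) (a : ℕ → Polynomial K)
    (h0 : A 0 = α)
    (hfrac : ∀ n, 0 < (A n - iota (a n)).orderTop ∧ A (n + 1) * (A n - iota (a n)) = 1)
    (p q : ℕ → Polynomial K)
    (hp0 : p 0 = a 0) (hq0 : q 0 = 1)
    (hp1 : p 1 = a 1 * a 0 + 1) (hq1 : q 1 = a 1)
    (hprec : ∀ n, p (n + 2) = a (n + 2) * p (n + 1) + p n)
    (hqrec : ∀ n, q (n + 2) = a (n + 2) * q (n + 1) + q n) :
    ∀ n : ℕ,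
      (iota (p n) - α * iota (q n)).orderTop = ((q (n + 1)).natDegree : WithTop ℤ) ∧
      (q (n + 1)).natDegree = (a (n + 1)).natDegree + (q n).natDegree ∧
      ((q n).natDegree : WithTop ℤ) < (iota (p n) - α * iota (q n)).orderTop := by
  have hapos : ∀ n, 0 < (a (n + 1)).natDegree := fun n => by
    have := natDegree_partialQuotient_succ hfrac n
    have := order_completeQuotient_succ_lt_zero hfrac n
    omega
  have hq := natDegree_den_succ hapos hq0 hq1 hqrec
  obtain ⟨hE0, hE⟩ := convergent_error_mul_completeQuotient h0 (fun n => (hfrac n).2)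
    hp0 hq0 hp1 hq1 hprec hqrec
  intro n
  obtain ⟨hne, hord⟩ := order_convergent_error
    (E := fun n => iota (p n) - α * iota (q n)) hfrac hq1 hq hE0 hE n
  have horderTop :
      (iota (p n) - α * iota (q n)).orderTop = ((q (n + 1)).natDegree : WithTop ℤ) := by
    rw [← HahnSeries.order_eq_orderTop_of_ne_zero hne, hord]
    rfl
  refine ⟨horderTop, hq n, ?_⟩
  rw [horderTop, hq n]
  exact_mod_cast Nat.lt_add_of_pos_left (hapos n)
end

section
/- Let O be a discrete valuation ring with fraction field K and residue field k of characteristic different from 2. Let α ∈ K((T)) be a Laurent series all of whose coefficients lie in O, and let γ ∈ k((T)) be its coefficientwise reduction. Let p, q ∈ O[X] be polynomials whose reductions p̄, q̄ ∈ k[X] satisfy q̄ ≠ 0, and suppose (p, q) is a convergent of α, i.e. orderTop(ι p − α·ι q) > deg q. Then orderTop(ι p̄ − γ·ι q̄) > deg q ≥ deg q̄; in particular (p̄, q̄) is a convergent of γ. -/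
/-!
Both defect series `ι p - α ι q` and `ι p̄ - γ ι q̄` have their `n`-th coefficient equal to the
image of one and the same element `convergentDefect c p q n ∈ O` (built from `p`, `q` and the
coefficients `c`), under `O → K` and `O → k` respectively. Since `O → K` is injective, every
coefficient killed in the first series is killed in the second, so reduction can only raise
`orderTop`.
-/

open Polynomial

namespace HahnSeries

variable {Γ R S : Type*} [LinearOrder Γ]

theorem orderTop_le_orderTop_of_support_subset [Zero R] [Zero S] {x : HahnSeries Γ R}
    {y : HahnSeries Γ S} (h : y.support ⊆ x.support) : x.orderTop ≤ y.orderTop :=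
  le_orderTop_iff_forall.mpr fun j hj => by
    by_contra hy
    exact (orderTop_le_of_coeff_ne_zero (h hy)).not_gt hj

theorem support_subset_of_coeff_eq_comp {O : Type*} [Zero O] [Zero R] [Zero S]
    {F G : Type*} [FunLike F O R] [ZeroHomClass F O R] [FunLike G O S] [ZeroHomClass G O S]
    (φ : F) (ψ : G) (hφ : Function.Injective φ) (d : Γ → O) {x : HahnSeries Γ R}
    {y : HahnSeries Γ S} (hx : ∀ n, x.coeff n = φ (d n)) (hy : ∀ n, y.coeff n = ψ (d n)) :
    y.support ⊆ x.support := by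
  intro n hn hxn
  rw [hx, map_eq_zero_iff φ hφ] at hxn
  exact hn (by rw [hy, hxn, map_zero])

end HahnSeries

section Iota

variable {K : Type*} [Field K]

theorem iota_monomial (i : ℕ) (a : K) :
    iota (monomial i a) = HahnSeries.single (-(i : ℤ)) a := by
  rw [iota, coe_eval₂RingHom, eval₂_monomial, HahnSeries.single_pow, one_pow, nsmul_eq_mul,
    mul_neg_one, HahnSeries.C_apply, HahnSeries.single_mul_single, zero_add, mul_one]

theorem coeff_iota (f : K[X]) (n : ℤ) :
    (iota f).coeff n = if n ≤ 0 then f.coeff n.natAbs else 0 := by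
  induction f using Polynomial.induction_on' with
  | add f g hf hg =>
    rw [map_add, HahnSeries.coeff_add, hf, hg]
    split_ifs <;> simp
  | monomial i a =>
    rw [iota_monomial, HahnSeries.coeff_single, coeff_monomial]
    by_cases hn : n = -(i : ℤ)
    · simp [hn]
    · rw [if_neg hn]
      split_ifs <;> first | rfl | omega

theorem coeff_mul_iota (β : LaurentSeries K) {g : K[X]} {N : ℕ} (hN : g.natDegree < N) (n : ℤ) :
    (β * iota g).coeff n = ∑ i ∈ Finset.range N, β.coeff (n + i) * g.coeff i := by
  conv_lhs => rw [g.as_sum_range' N hN, map_sum, Finset.mul_sum, HahnSeries.coeff_sum]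
  refine Finset.sum_congr rfl fun i _ => ?_
  rw [iota_monomial, ← HahnSeries.coeff_mul_single_add (a := n + i), add_neg_cancel_right]

end Iota

def convergentDefect {O : Type*} [CommRing O] (c : ℤ → O) (f g : O[X]) (n : ℤ) : O :=
  (if n ≤ 0 then f.coeff n.natAbs else 0) -
    ∑ i ∈ Finset.range (g.natDegree + 1), c (n + i) * g.coeff i

theorem coeff_iota_map_sub_mul {O F : Type*} [CommRing O] [Field F] (φ : O →+* F) {c : ℤ → O}
    {β : LaurentSeries F} (hβ : ∀ n, β.coeff n = φ (c n)) (f g : O[X]) (n : ℤ) :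
    (iota (f.map φ) - β * iota (g.map φ)).coeff n = φ (convergentDefect c f g n) := by
  rw [HahnSeries.coeff_sub, coeff_iota,
    coeff_mul_iota β (natDegree_map_le.trans_lt (Nat.lt_succ_self _)), convergentDefect,
    map_sub, map_sum, apply_ite φ, map_zero]
  simp only [coeff_map, hβ, map_mul]

theorem convergent_reduction_general {O : Type*} [CommRing O] [IsDomain O] [IsDiscreteValuationRing O]
    (α : LaurentSeries (FractionRing O))
    (γ : LaurentSeries (IsLocalRing.ResidueField O))
    (c : ℤ → O)
    (hαc : ∀ n : ℤ, α.coeff n = algebraMap O (FractionRing O) (c n))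
    (hγc : ∀ n : ℤ, γ.coeff n = IsLocalRing.residue O (c n))
    (p q : Polynomial O)
    (hconv : (q.natDegree : WithTop ℤ) <
      (iota (p.map (algebraMap O (FractionRing O))) -
        α * iota (q.map (algebraMap O (FractionRing O)))).orderTop) :
    (q.natDegree : WithTop ℤ) <
      (iota (p.map (IsLocalRing.residue O)) -
        γ * iota (q.map (IsLocalRing.residue O))).orderTop ∧
    (q.map (IsLocalRing.residue O)).natDegree ≤ q.natDegree := by
  have hsupp := HahnSeries.support_subset_of_coeff_eq_comp _ _
    (IsFractionRing.injective O (FractionRing O)) (convergentDefect c p q)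
    (coeff_iota_map_sub_mul _ hαc p q) (coeff_iota_map_sub_mul _ hγc p q)
  exact ⟨hconv.trans_le (HahnSeries.orderTop_le_orderTop_of_support_subset hsupp),
    natDegree_map_le⟩

/-- Convergents remain convergents after reduction: if `α` has coefficients in a DVR `O`
(with residue characteristic ≠ 2), `γ` is its coefficientwise reduction, `p, q ∈ O[X]` with
`q̄ ≠ 0`, and `(p, q)` is a convergent of `α`, then `(p̄, q̄)` is a convergent of `γ` with
`orderTop (ι p̄ - γ ι q̄) > deg q ≥ deg q̄`. -/
theorem convergent_reduction {O : Type*} [CommRing O] [IsDomain O] [IsDiscreteValuationRing O]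
    (h2 : (2 : IsLocalRing.ResidueField O) ≠ 0)
    (α : LaurentSeries (FractionRing O))
    (γ : LaurentSeries (IsLocalRing.ResidueField O))
    (c : ℤ → O)
    (hαc : ∀ n : ℤ, α.coeff n = algebraMap O (FractionRing O) (c n))
    (hγc : ∀ n : ℤ, γ.coeff n = IsLocalRing.residue O (c n))
    (p q : Polynomial O)
    (hqbar : q.map (IsLocalRing.residue O) ≠ 0)
    (hconv : (q.natDegree : WithTop ℤ) <
      (iota (p.map (algebraMap O (FractionRing O))) -
        α * iota (q.map (algebraMap O (FractionRing O)))).orderTop) :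
    (q.natDegree : WithTop ℤ) <
      (iota (p.map (IsLocalRing.residue O)) -
        γ * iota (q.map (IsLocalRing.residue O))).orderTop ∧
    (q.map (IsLocalRing.residue O)).natDegree ≤ q.natDegree :=
  convergent_reduction_general α γ c hαc hγc p q hconv
end
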